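/- Let n = 2^k, k ≥ 2, and let s_k be the doubling magnitude sequence. For any sign sequence d ∈ {+1,−1}^{2^k−1}, the partial sums P_t = Σ_{i≤t} d_i s_k(i) mod 2^k are pairwise distinct for t = 0, 1, ..., 2^k − 1 (with P_0 = 0). In particular the walk visits each of the n positions exactly once. -/

import Mathlib

/-!
The magnitude sequences satisfy `s_{k+1} = 2 s_k ++ [1] ++ 2 s_k`. Along the first
copy of `2 s_k` the partial sums are twice those of `s_k`, hence even; once the step of size `1`
has been taken they are odd, and along the second copy they are an odd constant plus twice the
partial sums of `s_k` for the shifted signs. So two positions congruent modulo `2^(k+1)` lie in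
the same half, where the congruence halves to one modulo `2^k` and induction applies.
-/

/-- The doubling magnitude sequence for the Magnus-Derek game on `2^k` nodes. -/
def magSeq (k : ℕ) : ℕ → List ℕ
  | 0 => []
  | 1 => [2 ^ (k - 1)]
  | j + 2 => magSeq k (j + 1) ++ [2 ^ (k - 1 - (j + 1))] ++ magSeq k (j + 1)

theorem magSeq_length (k : ℕ) : ∀ j, (magSeq k j).length = 2 ^ j - 1
  | 0 => rfl
  | 1 => rfl
  | j + 2 => by
      have := Nat.one_le_two_pow (n := j)
      simp only [magSeq, List.length_append, List.length_singleton, magSeq_length k (j + 1),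
        pow_succ]
      omega

theorem magSeq_succ_eq_map (k : ℕ) : ∀ j ≤ k, magSeq (k + 1) j = (magSeq k j).map (2 * ·)
  | 0, _ => rfl
  | 1, h => by
      obtain ⟨m, rfl⟩ := Nat.exists_eq_add_of_le' h
      simp [magSeq, pow_succ, mul_comm]
  | j + 2, h => by
      have hexp : k + 1 - 1 - (j + 1) = k - 1 - (j + 1) + 1 := by omega
      simp only [magSeq, magSeq_succ_eq_map k (j + 1) (by omega), hexp, List.map_append,
        List.map_cons, List.map_nil, pow_succ, mul_comm]

theorem magSeq_succ_self (k : ℕ) :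
    magSeq (k + 1) (k + 1) = (magSeq k k).map (2 * ·) ++ [1] ++ (magSeq k k).map (2 * ·) := by
  cases k with
  | zero => rfl
  | succ m =>
    rw [magSeq, magSeq_succ_eq_map (m + 1) (m + 1) le_rfl]
    simp

/-- The walk's position after `t` steps, before reduction; magnitudes past the end of `l`
count as `0`. -/
def signedSum (l : List ℕ) (d : ℕ → ℤ) (t : ℕ) : ℤ :=
  ∑ i ∈ Finset.range t, d i * l.getD i 0

section signedSum

variable (d : ℕ → ℤ)

theorem signedSum_map_two_mul (l : List ℕ) (t : ℕ) :
    signedSum (l.map (2 * ·)) d t = 2 * signedSum l d t := by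
  rw [signedSum, signedSum, Finset.mul_sum]
  refine Finset.sum_congr rfl fun i _ => ?_
  have hmap := List.getD_map l 0 (n := i) (2 * ·)
  rw [mul_zero] at hmap
  rw [hmap]
  push_cast
  ring

theorem signedSum_append_of_le (l₁ l₂ : List ℕ) {t : ℕ} (ht : t ≤ l₁.length) :
    signedSum (l₁ ++ l₂) d t = signedSum l₁ d t :=
  Finset.sum_congr rfl fun i hi => by
    rw [List.getD_append _ _ _ _ ((Finset.mem_range.1 hi).trans_le ht)]

theorem signedSum_append_add (l₁ l₂ : List ℕ) (r : ℕ) :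
    signedSum (l₁ ++ l₂) d (l₁.length + r) =
      signedSum l₁ d l₁.length + signedSum l₂ (fun i => d (l₁.length + i)) r := by
  rw [signedSum, Finset.sum_range_add, ← signedSum, signedSum_append_of_le d l₁ l₂ le_rfl]
  congr 1
  refine Finset.sum_congr rfl fun i _ => ?_
  rw [List.getD_append_right _ _ _ _ (Nat.le_add_right _ _), Nat.add_sub_cancel_left]

end signedSum

section magSeq

variable (k : ℕ) (d : ℕ → ℤ)

theorem signedSum_magSeq_succ_of_lt {t : ℕ} (ht : t < 2 ^ k) :
    signedSum (magSeq (k + 1) (k + 1)) d t = 2 * signedSum (magSeq k k) d t := by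
  have hlen : t ≤ ((magSeq k k).map (2 * ·)).length := by
    rw [List.length_map, magSeq_length]
    omega
  rw [magSeq_succ_self, signedSum_append_of_le _ _ _ (by simp [magSeq_length]; omega),
    signedSum_append_of_le _ _ _ hlen, signedSum_map_two_mul]

theorem signedSum_magSeq_succ_add (r : ℕ) :
    signedSum (magSeq (k + 1) (k + 1)) d (2 ^ k + r) =
      (2 * signedSum (magSeq k k) d (2 ^ k - 1) + d (2 ^ k - 1)) +
        2 * signedSum (magSeq k k) (fun i => d (2 ^ k + i)) r := by
  have hlen : ((magSeq k k).map (2 * ·)).length = 2 ^ k - 1 := by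
    rw [List.length_map, magSeq_length]
  have hlen' : ((magSeq k k).map (2 * ·) ++ [1]).length = 2 ^ k := by
    simp only [List.length_append, hlen, List.length_singleton]
    have := Nat.one_le_two_pow (n := k)
    omega
  have hmid : signedSum ((magSeq k k).map (2 * ·) ++ [1]) d (2 ^ k) =
      2 * signedSum (magSeq k k) d (2 ^ k - 1) + d (2 ^ k - 1) := by
    rw [← hlen', List.length_append, signedSum_append_add, signedSum_map_two_mul, hlen]
    simp [signedSum]
  rw [magSeq_succ_self, ← hlen', signedSum_append_add, hlen', hmid, signedSum_map_two_mul]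

end magSeq

theorem Int.not_two_mul_modEq_odd_add_two_mul {c : ℤ} (hc : Odd c) (x y : ℤ) {k : ℕ} :
    ¬ 2 * x ≡ c + 2 * y [ZMOD 2 ^ (k + 1)] := by
  intro h
  have h2 : (2 : ℤ) ∣ c + 2 * y - 2 * x := (dvd_pow_self 2 k.succ_ne_zero).trans h.dvd
  obtain ⟨m, rfl⟩ := hc
  omega

theorem signedSum_magSeq_injective_mod (k : ℕ) {d : ℕ → ℤ} (hd : ∀ i, Odd (d i))
    {t₁ t₂ : ℕ} (h₁ : t₁ < 2 ^ k) (h₂ : t₂ < 2 ^ k)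
    (h : signedSum (magSeq k k) d t₁ ≡ signedSum (magSeq k k) d t₂ [ZMOD 2 ^ k]) :
    t₁ = t₂ := by
  induction k generalizing d t₁ t₂ with
  | zero => omega
  | succ k ih =>
    have hpow : (2 : ℤ) ^ (k + 1) = 2 * 2 ^ k := pow_succ' 2 k
    have hc : Odd (d (2 ^ k - 1)) := hd _
    rcases lt_or_ge t₁ (2 ^ k) with ht₁ | ht₁ <;> rcases lt_or_ge t₂ (2 ^ k) with ht₂ | ht₂
    · rw [signedSum_magSeq_succ_of_lt k d ht₁, signedSum_magSeq_succ_of_lt k d ht₂, hpow] at h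
      exact ih hd ht₁ ht₂ (h.mul_left_cancel' two_ne_zero)
    · obtain ⟨r₂, rfl⟩ := Nat.exists_eq_add_of_le ht₂
      rw [signedSum_magSeq_succ_of_lt k d ht₁, signedSum_magSeq_succ_add] at h
      exact absurd h (Int.not_two_mul_modEq_odd_add_two_mul (Even.add_odd (even_two_mul _) hc) _ _)
    · obtain ⟨r₁, rfl⟩ := Nat.exists_eq_add_of_le ht₁
      rw [signedSum_magSeq_succ_of_lt k d ht₂, signedSum_magSeq_succ_add] at h
      exact absurd h.symm
        (Int.not_two_mul_modEq_odd_add_two_mul (Even.add_odd (even_two_mul _) hc) _ _)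
    · obtain ⟨r₁, rfl⟩ := Nat.exists_eq_add_of_le ht₁
      obtain ⟨r₂, rfl⟩ := Nat.exists_eq_add_of_le ht₂
      rw [signedSum_magSeq_succ_add, signedSum_magSeq_succ_add, hpow] at h
      have := ih (fun i => hd (2 ^ k + i)) (by omega) (by omega)
        ((h.add_left_cancel' _).mul_left_cancel' two_ne_zero)
      omega

theorem stmt_15_general (k : ℕ) (d : ℕ → ℤ) (hd : ∀ i, d i = 1 ∨ d i = -1) :
    ∀ t₁ t₂ : ℕ, t₁ ≤ 2 ^ k - 1 → t₂ ≤ 2 ^ k - 1 →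
      ((∑ i ∈ Finset.range t₁, d i * ((magSeq k k).getD i 0) : ℤ) : ZMod (2 ^ k)) =
      ((∑ i ∈ Finset.range t₂, d i * ((magSeq k k).getD i 0) : ℤ) : ZMod (2 ^ k)) →
      t₁ = t₂ := by
  intro t₁ t₂ h₁ h₂ heq
  have hodd : ∀ i, Odd (d i) := fun i => by rcases hd i with h | h <;> rw [h] <;> decide
  have hpos := Nat.one_le_two_pow (n := k)
  have hmod := (ZMod.intCast_eq_intCast_iff _ _ (2 ^ k)).1 heq
  push_cast at hmod
  exact signedSum_magSeq_injective_mod k hodd (by omega) (by omega) hmod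

/-- For any sign sequence, the partial sums `P t = Σ_{i<t} d i * s_k(i) mod 2^k`
are pairwise distinct for `t = 0, 1, …, 2^k - 1`: the walk visits each of the
`n = 2^k` positions exactly once. -/
theorem stmt_15 (k : ℕ) (hk : 2 ≤ k) (d : ℕ → ℤ) (hd : ∀ i, d i = 1 ∨ d i = -1) :
    ∀ t₁ t₂ : ℕ, t₁ ≤ 2 ^ k - 1 → t₂ ≤ 2 ^ k - 1 →
      ((∑ i ∈ Finset.range t₁, d i * ((magSeq k k).getD i 0) : ℤ) : ZMod (2 ^ k)) =
      ((∑ i ∈ Finset.range t₂, d i * ((magSeq k k).getD i 0) : ℤ) : ZMod (2 ^ k)) →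
      t₁ = t₂ :=
  stmt_15_general k d hd
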